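/- arXiv:2307.14290 — 2 statements merged into one kernel-verified Lean document; each statement's English description precedes it below -/
import Mathlib

section
/- Let X be a real random variable such that G_X(α, 0) < ∞ for all α in some open interval containing 1. Then the function α ↦ G_X(α, 0) is differentiable at α = 1 and its derivative there equals −𝒞ℰ(X), i.e. 𝒞ℰ(X) = −(∂/∂α) G_X(α, 0)|_{α=1}. -/
open MeasureTheory ProbabilityTheory Set

/-- The (essential) support interval of a CDF `F`: the set where `0 < F x < 1`,
which coincides (up to endpoints) with the interval `(l, r)` where
`l = inf {x : F x > 0}` and `r = sup {x : 1 - F x > 0}`. -/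
def cigfSupport (F : ℝ → ℝ) : Set ℝ := {x | 0 < F x ∧ F x < 1}

/-- The cumulative information generating function
`G_X(α, β) = ∫_l^r F(x)^α (1 - F(x))^β dx`. -/
noncomputable def cigf (F : ℝ → ℝ) (α β : ℝ) : ℝ :=
  ∫ x in cigfSupport F, F x ^ α * (1 - F x) ^ β

/-- `(α, β) ∈ D_X`, i.e. `G_X(α, β) < ∞`. -/
def memD (F : ℝ → ℝ) (α β : ℝ) : Prop :=
  IntegrableOn (fun x => F x ^ α * (1 - F x) ^ β) (cigfSupport F)

/-- The CDF of a random variable `X` under the probability measure `P`. -/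
noncomputable def rvCDF {Ω : Type*} [MeasurableSpace Ω] (P : Measure Ω) (X : Ω → ℝ) (x : ℝ) : ℝ :=
  (P {ω | X ω ≤ x}).toReal

/-- The CDF of a probability measure on `ℝ`. -/
noncomputable def cdfOf (μ : Measure ℝ) (x : ℝ) : ℝ := (μ (Iic x)).toReal

/-- The cumulative entropy `𝒞ℰ(X) = -∫_l^r F x * log (F x) dx`. -/
noncomputable def CE (F : ℝ → ℝ) : ℝ :=
  -∫ x in cigfSupport F, F x * Real.log (F x)

open Real

/-! Differentiate under the integral sign. For `t` within `δ` of `s` and `c ≤ s - 2δ`, the bound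
`x ^ δ * |log x| < 1 / δ` on `(0, 1]` gives `|x ^ t * log x| ≤ δ⁻¹ * x ^ c`, so the integrability of
`F ^ c` for one exponent `c < 1` dominates all derivatives near `1`. -/

lemma abs_rpow_mul_log_le {x c t δ : ℝ} (hx₀ : 0 < x) (hx₁ : x ≤ 1) (hδ : 0 < δ)
    (hct : c ≤ t - δ) : |x ^ t * log x| ≤ δ⁻¹ * x ^ c :=
  calc |x ^ t * log x| = x ^ (t - δ) * |log x * x ^ δ| := by
        rw [abs_mul, abs_mul, abs_of_pos (rpow_pos_of_pos hx₀ _), abs_of_pos (rpow_pos_of_pos hx₀ _),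
          rpow_sub hx₀]
        field_simp [(rpow_pos_of_pos hx₀ δ).ne']
    _ ≤ x ^ c * δ⁻¹ := by
        refine mul_le_mul (rpow_le_rpow_of_exponent_ge hx₀ hx₁ hct) ?_ (abs_nonneg _)
          (rpow_nonneg hx₀.le _)
        simpa only [one_div] using (abs_log_mul_self_rpow_lt x δ hx₀ hx₁ hδ).le
    _ = δ⁻¹ * x ^ c := mul_comm _ _

theorem hasDerivAt_integral_rpow {α : Type*} [MeasurableSpace α] {μ : Measure α} {f : α → ℝ}
    (hf : AEMeasurable f μ) (hf₀ : ∀ᵐ x ∂μ, 0 < f x) (hf₁ : ∀ᵐ x ∂μ, f x ≤ 1) {c s : ℝ}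
    (hcs : c < s) (hc : Integrable (fun x => f x ^ c) μ) :
    HasDerivAt (fun t => ∫ x, f x ^ t ∂μ) (∫ x, f x ^ s * log (f x) ∂μ) s := by
  set δ := (s - c) / 2
  have hδ : 0 < δ := by simp only [δ]; linarith
  have hs_int : Integrable (fun x => f x ^ s) μ := by
    refine hc.mono' (hf.pow_const s).aestronglyMeasurable ?_
    filter_upwards [hf₀, hf₁] with x hx₀ hx₁
    rw [norm_of_nonneg (rpow_nonneg hx₀.le _)]
    exact rpow_le_rpow_of_exponent_ge hx₀ hx₁ hcs.le
  have h_bound : ∀ᵐ x ∂μ, ∀ t ∈ Metric.ball s δ, ‖f x ^ t * log (f x)‖ ≤ δ⁻¹ * f x ^ c := by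
    filter_upwards [hf₀, hf₁] with x hx₀ hx₁ t ht
    rw [Real.ball_eq_Ioo, mem_Ioo] at ht
    exact abs_rpow_mul_log_le hx₀ hx₁ hδ (by simp only [δ] at ht ⊢; linarith [ht.1])
  have h_diff : ∀ᵐ x ∂μ, ∀ t ∈ Metric.ball s δ,
      HasDerivAt (fun t => f x ^ t) (f x ^ t * log (f x)) t := by
    filter_upwards [hf₀] with x hx₀ t _
    exact (hasStrictDerivAt_const_rpow hx₀ t).hasDerivAt
  exact (hasDerivAt_integral_of_dominated_loc_of_deriv_le (Metric.ball_mem_nhds s hδ)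
    (.of_forall fun t => (hf.pow_const t).aestronglyMeasurable) hs_int
    ((hf.pow_const s).mul hf.log).aestronglyMeasurable h_bound (hc.const_mul δ⁻¹) h_diff).2

lemma monotone_rvCDF {Ω : Type*} [MeasurableSpace Ω] (P : Measure Ω) [IsFiniteMeasure P]
    (X : Ω → ℝ) : Monotone (rvCDF P X) := fun _ _ hxy =>
  ENNReal.toReal_mono (measure_ne_top P _) (measure_mono fun _ hω => le_trans hω hxy)

lemma measurableSet_cigfSupport {F : ℝ → ℝ} (hF : Measurable F) :
    MeasurableSet (cigfSupport F) :=
  (measurableSet_lt measurable_const hF).inter (measurableSet_lt hF measurable_const)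

theorem stmt5_general {Ω : Type*} [MeasurableSpace Ω] (P : Measure Ω) [IsProbabilityMeasure P]
    (X : Ω → ℝ)
    (a b : ℝ) (ha : a < 1) (hb : 1 < b)
    (hfin : ∀ α ∈ Ioo a b, memD (rvCDF P X) α 0) :
    HasDerivAt (fun α => cigf (rvCDF P X) α 0) (-(CE (rvCDF P X))) 1 := by
  set F := rvCDF P X
  have hF : Measurable F := (monotone_rvCDF P X).measurable
  have hS : ∀ᵐ x ∂volume.restrict (cigfSupport F), x ∈ cigfSupport F :=
    ae_restrict_mem (measurableSet_cigfSupport hF)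
  have hc : IntegrableOn (fun x => F x ^ ((a + 1) / 2)) (cigfSupport F) := by
    simpa only [memD, rpow_zero, mul_one] using hfin _ ⟨by linarith, by linarith⟩
  have hderiv := hasDerivAt_integral_rpow hF.aemeasurable (hS.mono fun _ hx => hx.1)
    (hS.mono fun _ hx => hx.2.le) (s := 1) (by linarith) hc
  simpa only [cigf, CE, rpow_zero, mul_one, rpow_one, neg_neg] using hderiv

/-- If `G_X(α, 0) < ∞` for all `α` in an open interval containing `1`, then
`α ↦ G_X(α, 0)` is differentiable at `α = 1` with derivative `-𝒞ℰ(X)`. -/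
theorem stmt5 {Ω : Type*} [MeasurableSpace Ω] (P : Measure Ω) [IsProbabilityMeasure P]
    (X : Ω → ℝ) (hX : Measurable X)
    (a b : ℝ) (ha : a < 1) (hb : 1 < b)
    (hfin : ∀ α ∈ Ioo a b, memD (rvCDF P X) α 0) :
    HasDerivAt (fun α => cigf (rvCDF P X) α 0) (-(CE (rvCDF P X))) 1 :=
  stmt5_general P X a b ha hb hfin
end

section
/- Let X be a nonnegative random variable with support (0, r), r ∈ (0, ∞], with 0 < E[X] < ∞ and F(x) > 0 for all x > 0, and let α > 0, β > 0 be such that G_X(α, β) < ∞. Then G_X(α, β) = Σ_{n=0}^∞ C(α, n) (−1)^n (E[X])^{n+β} · 𝒢_e(n+β), where C(α, n) = α(α−1)···(α−n+1)/n! is the generalized binomial coefficient and 𝒢_e(ν) = ∫_0^r (F̄(x)/E[X])^ν dx is the information generating function of the equilibrium density f_e(x) = F̄(x)/E[X]. -/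
open MeasureTheory ProbabilityTheory Set

/-- The generalized binomial coefficient `C(a, n) = a(a-1)⋯(a-n+1)/n!`. -/
noncomputable def genBinom (a : ℝ) (n : ℕ) : ℝ :=
  (∏ i ∈ Finset.range n, (a - i)) / (n.factorial : ℝ)

/-! Expand `F ^ α = (1 - (1 - F)) ^ α` by the binomial series and integrate term by term over
`(0, ∞)`, where `0 < F ≤ 1`. The interchange is legitimate because `∑ |C(α, n)| < ∞` for `α > 0`
and `(1 - F) ^ (n + β) ≤ (1 - F) ^ β`, which is integrable: near `0` it is bounded, and beyond `1`
it is at most `F(1) ^ (-α)` times the integrand of `G_X(α, β)`. Finally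
`∫ (1 - F) ^ ν = E[X] ^ ν 𝒢ₑ(ν)`. -/

open Polynomial in
theorem genBinom_eq_choose (a : ℝ) (n : ℕ) : genBinom a n = Ring.choose a n := by
  rw [Ring.choose_eq_smul, genBinom, ← descPochhammer_eval_eq_prod_range, smul_eq_mul,
    div_eq_inv_mul, ← descPochhammer_map (algebraMap ℤ ℝ), eval_map_algebraMap, aeval_eq_smeval]

theorem hasSum_genBinom_mul_pow (a : ℝ) {t : ℝ} (ht : |t| < 1) :
    HasSum (fun n : ℕ => genBinom a n * t ^ n) ((1 + t) ^ a) := by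
  have := Real.one_add_rpow_hasFPowerSeriesOnBall_zero (a := a) |>.hasSum
    (y := t) (by simpa [enorm_eq_nnnorm, ← NNReal.coe_lt_one] using ht)
  simpa [binomialSeries, genBinom_eq_choose, FormalMultilinearSeries.ofScalars] using this

theorem genBinom_succ (a : ℝ) (n : ℕ) :
    genBinom a (n + 1) = genBinom a n * ((a - n) / (n + 1)) := by
  simp only [genBinom, Finset.prod_range_succ, Nat.factorial_succ]
  push_cast
  rw [div_mul_div_comm, mul_comm ((n : ℝ) + 1)]

theorem abs_genBinom_succ {a : ℝ} {n : ℕ} (h : a ≤ n) :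
    (n + 1) * |genBinom a (n + 1)| = (n - a) * |genBinom a n| := by
  rw [genBinom_succ, abs_mul, abs_div, abs_sub_comm, abs_of_nonneg (sub_nonneg.2 h),
    abs_of_pos (by positivity : (0 : ℝ) < n + 1)]
  field_simp

/-- For `k ≥ a`, `a |C(a, k)| = k |C(a, k)| - (k + 1) |C(a, k + 1)|`, so the partial sums
telescope. -/
theorem summable_abs_genBinom {a : ℝ} (ha : 0 < a) : Summable fun n => |genBinom a n| := by
  obtain ⟨N, hN⟩ := exists_nat_ge a
  set w : ℕ → ℝ := fun k => ((k + N : ℕ) : ℝ) * |genBinom a (k + N)|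
  have htel : ∀ k, a * |genBinom a (k + N)| = w k - w (k + 1) := fun k => by
    have h := abs_genBinom_succ (n := k + N) (hN.trans (mod_cast N.le_add_left k))
    simp only [w, Nat.add_right_comm k 1 N]
    push_cast at h ⊢
    linarith
  rw [← summable_nat_add_iff N]
  refine summable_of_sum_range_le (c := w 0 / a) (fun _ => abs_nonneg _) fun M => ?_
  rw [le_div_iff₀' ha, Finset.mul_sum, Finset.sum_congr rfl fun k _ => htel k,
    Finset.sum_range_sub']
  have : 0 ≤ w M := by positivity
  linarith

theorem hasSum_genBinom_mul_one_sub_rpow {α β x : ℝ} (hβ : 0 < β) (hx : x ∈ Ioc 0 1) :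
    HasSum (fun n : ℕ => genBinom α n * (-1) ^ n * (1 - x) ^ ((n : ℝ) + β))
      (x ^ α * (1 - x) ^ β) := by
  have ht : |x - 1| < 1 := abs_lt.2 ⟨by linarith [hx.1], by linarith [hx.2]⟩
  have h := (hasSum_genBinom_mul_pow α ht).mul_right ((1 - x) ^ β)
  rw [add_sub_cancel] at h
  refine h.congr_fun fun n => ?_
  rw [Real.rpow_add' (sub_nonneg.2 hx.2) (by positivity), Real.rpow_natCast,
    show x - 1 = -1 * (1 - x) by ring, mul_pow]
  ring

theorem norm_one_sub_rpow_le {x p q : ℝ} (hx : x ∈ Ioc 0 1) (hq : 0 ≤ q) (hqp : q ≤ p) :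
    ‖(1 - x) ^ p‖ ≤ (1 - x) ^ q := by
  have h0 : 0 ≤ 1 - x := sub_nonneg.2 hx.2
  rw [Real.norm_of_nonneg (Real.rpow_nonneg h0 p)]
  exact Real.rpow_le_rpow_of_exponent_ge' h0 (by linarith [hx.1]) hq hqp

theorem integral_rpow_mul_one_sub_rpow_eq_tsum {X : Type*} [MeasurableSpace X] {ν : Measure X}
    {F : X → ℝ} {α β : ℝ} (hα : 0 < α) (hβ : 0 < β) (hF : AEStronglyMeasurable F ν)
    (hF01 : ∀ᵐ x ∂ν, F x ∈ Ioc 0 1) (hint : Integrable (fun x => (1 - F x) ^ β) ν) :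
    ∫ x, F x ^ α * (1 - F x) ^ β ∂ν =
      ∑' n : ℕ, genBinom α n * (-1) ^ n * ∫ x, (1 - F x) ^ ((n : ℝ) + β) ∂ν := by
  have hmeas (p : ℝ) : AEStronglyMeasurable (fun x => (1 - F x) ^ p) ν :=
    ((hF.aemeasurable.const_sub 1).pow_const p).aestronglyMeasurable
  have hle (n : ℕ) : ∀ᵐ x ∂ν, ‖(1 - F x) ^ ((n : ℝ) + β)‖ ≤ (1 - F x) ^ β := by
    filter_upwards [hF01] with x hx
    exact norm_one_sub_rpow_le hx hβ.le (by linarith [n.cast_nonneg (α := ℝ)])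
  have hint_n (n : ℕ) : Integrable (fun x => (1 - F x) ^ ((n : ℝ) + β)) ν :=
    hint.mono' (hmeas _) (hle n)
  set f : ℕ → X → ℝ := fun n x => genBinom α n * (-1) ^ n * (1 - F x) ^ ((n : ℝ) + β)
  have hsum : Summable fun n => ∫ x, ‖f n x‖ ∂ν := by
    refine ((summable_abs_genBinom hα).mul_right (∫ x, (1 - F x) ^ β ∂ν)).of_nonneg_of_le
      (fun n => integral_nonneg fun x => norm_nonneg _) fun n => ?_
    simp only [f, norm_mul, norm_pow, norm_neg, norm_one, one_pow, mul_one]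
    rw [integral_const_mul, Real.norm_eq_abs]
    exact mul_le_mul_of_nonneg_left (integral_mono_ae (hint_n n).norm hint (hle n))
      (abs_nonneg _)
  calc ∫ x, F x ^ α * (1 - F x) ^ β ∂ν = ∫ x, ∑' n, f n x ∂ν :=
        integral_congr_ae <| by
          filter_upwards [hF01] with x hx
          exact (hasSum_genBinom_mul_one_sub_rpow hβ hx).tsum_eq.symm
    _ = ∑' n, ∫ x, f n x ∂ν :=
        (integral_tsum_of_summable_integral_norm (fun n => (hint_n n).const_mul _) hsum).symm
    _ = _ := tsum_congr fun n => integral_const_mul _ _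

theorem cdfOf_eq_cdf (μ : Measure ℝ) [IsProbabilityMeasure μ] : cdfOf μ = cdf μ :=
  funext fun x => (cdf_eq_real μ x).symm

theorem cdf_mem_Icc (μ : Measure ℝ) (x : ℝ) : cdf μ x ∈ Icc 0 1 :=
  ⟨cdf_nonneg μ x, cdf_le_one μ x⟩

theorem cigfSupport_cdf_subset_Ici {μ : Measure ℝ} [IsProbabilityMeasure μ]
    (hnn : μ (Iio 0) = 0) : cigfSupport (cdf μ) ⊆ Ici 0 := fun x hx => by
  by_contra hx0
  have : cdf μ x = 0 := by
    rw [cdf_eq_real, measureReal_eq_zero_iff]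
    exact measure_mono_null (Iic_subset_Iio.2 (not_le.1 hx0)) hnn
  exact hx.1.ne' this

section Support

variable {F : ℝ → ℝ} {α β : ℝ}

theorem rpow_mul_one_sub_rpow_eq_zero_of_notMem_cigfSupport {x : ℝ} (hx01 : F x ∈ Icc 0 1)
    (hα : α ≠ 0) (hβ : β ≠ 0) (hx : x ∉ cigfSupport F) : F x ^ α * (1 - F x) ^ β = 0 := by
  rcases hx01.1.eq_or_lt with h0 | hpos
  · rw [← h0, Real.zero_rpow hα, zero_mul]
  · have h1 : F x = 1 := by
      by_contra h1
      exact hx ⟨hpos, lt_of_le_of_ne hx01.2 h1⟩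
    rw [h1, sub_self, Real.zero_rpow hβ, mul_zero]

theorem cigf_eq_integral_Ioi (hF01 : ∀ x, F x ∈ Icc 0 1) (hsupp : cigfSupport F ⊆ Ici 0)
    (hα : α ≠ 0) (hβ : β ≠ 0) :
    cigf F α β = ∫ x in Ioi 0, F x ^ α * (1 - F x) ^ β := by
  rw [cigf, ← integral_Ici_eq_integral_Ioi, setIntegral_eq_of_subset_of_forall_sdiff_eq_zero
    measurableSet_Ici hsupp fun x hx =>
      rpow_mul_one_sub_rpow_eq_zero_of_notMem_cigfSupport (hF01 x) hα hβ hx.2]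

theorem memD.integrableOn (hD : memD F α β) (hF01 : ∀ x, F x ∈ Icc 0 1) (hα : α ≠ 0)
    (hβ : β ≠ 0) {t : Set ℝ} (ht : MeasurableSet t) :
    IntegrableOn (fun x => F x ^ α * (1 - F x) ^ β) t :=
  hD.of_forall_sdiff_eq_zero ht fun x hx =>
    rpow_mul_one_sub_rpow_eq_zero_of_notMem_cigfSupport (hF01 x) hα hβ hx.2

end Support

theorem integrableOn_Ioi_one_sub_rpow {F : ℝ → ℝ} (hmono : Monotone F)
    (hF01 : ∀ x, F x ∈ Icc 0 1) {a c α β : ℝ} (hac : a ≤ c) (hc : 0 < F c) (hα : 0 ≤ α)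
    (hβ : 0 ≤ β) (h : IntegrableOn (fun x => F x ^ α * (1 - F x) ^ β) (Ioi a)) :
    IntegrableOn (fun x => (1 - F x) ^ β) (Ioi a) := by
  have hmeas : AEStronglyMeasurable (fun x => (1 - F x) ^ β) :=
    ((measurable_const.sub hmono.measurable).pow_const β).aestronglyMeasurable
  have hle_one (x : ℝ) : ‖(1 - F x) ^ β‖ ≤ 1 := by
    rw [Real.norm_of_nonneg (Real.rpow_nonneg (sub_nonneg.2 (hF01 x).2) β)]
    exact Real.rpow_le_one (sub_nonneg.2 (hF01 x).2) (by linarith [(hF01 x).1]) hβ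
  have hfar : IntegrableOn (fun x => (1 - F x) ^ β) (Ioi c) := by
    refine Integrable.mono' ((h.mono_set (Ioi_subset_Ioi hac)).const_mul (F c ^ α)⁻¹)
      hmeas.restrict ?_
    filter_upwards [self_mem_ae_restrict measurableSet_Ioi] with x hx
    have hx0 : 0 ≤ 1 - F x := sub_nonneg.2 (hF01 x).2
    rw [Real.norm_of_nonneg (Real.rpow_nonneg hx0 β), le_inv_mul_iff₀ (by positivity)]
    exact mul_le_mul_of_nonneg_right
      (Real.rpow_le_rpow (hF01 c).1 (hmono (le_of_lt hx)) hα) (Real.rpow_nonneg hx0 β)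
  have hnear : IntegrableOn (fun x => (1 - F x) ^ β) (Ioc a c) :=
    .of_bound measure_Ioc_lt_top hmeas.restrict 1 (ae_of_all _ hle_one)
  exact (hnear.union hfar).mono_set (by rw [Ioc_union_Ioi_eq_Ioi hac])

theorem mul_integral_div_rpow {X : Type*} [MeasurableSpace X] {ν : Measure X} {g : X → ℝ}
    (hg : ∀ x, 0 ≤ g x) {m : ℝ} (hm : 0 < m) (p : ℝ) :
    m ^ p * ∫ x, (g x / m) ^ p ∂ν = ∫ x, g x ^ p ∂ν := by
  simp_rw [Real.div_rpow (hg _) hm.le, integral_div]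
  field_simp

theorem stmt13_general (μ : Measure ℝ) [IsProbabilityMeasure μ]
    (hnn : μ (Iio 0) = 0)
    (hm : 0 < ∫ x, x ∂μ)
    (hF : ∀ x : ℝ, 0 < x → 0 < cdfOf μ x)
    (α β : ℝ) (hα : 0 < α) (hβ : 0 < β) (hD : memD (cdfOf μ) α β) :
    cigf (cdfOf μ) α β =
      ∑' n : ℕ, genBinom α n * (-1) ^ n * (∫ x, x ∂μ) ^ ((n : ℝ) + β) *
        ∫ x in Ioi (0:ℝ), ((1 - cdfOf μ x) / ∫ y, y ∂μ) ^ ((n : ℝ) + β) := by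
  rw [cdfOf_eq_cdf] at hF hD ⊢
  have hint : IntegrableOn (fun x => (1 - cdf μ x) ^ β) (Ioi 0) :=
    integrableOn_Ioi_one_sub_rpow (cdf μ).mono (cdf_mem_Icc μ) zero_le_one (hF 1 one_pos) hα.le
      hβ.le (hD.integrableOn (cdf_mem_Icc μ) hα.ne' hβ.ne' measurableSet_Ioi)
  have hF01 : ∀ᵐ x ∂volume.restrict (Ioi 0), cdf μ x ∈ Ioc 0 1 :=
    (ae_restrict_mem measurableSet_Ioi).mono fun x hx => ⟨hF x hx, cdf_le_one μ x⟩
  rw [cigf_eq_integral_Ioi (cdf_mem_Icc μ) (cigfSupport_cdf_subset_Ici hnn) hα.ne' hβ.ne',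
    integral_rpow_mul_one_sub_rpow_eq_tsum hα hβ (cdf μ).mono.measurable.aestronglyMeasurable
      hF01 hint]
  refine tsum_congr fun n => ?_
  rw [eq_comm, mul_assoc, mul_integral_div_rpow (fun x => sub_nonneg.2 (cdf_le_one μ x)) hm]

/-- For a nonnegative `X` with support `(0, r)`, `0 < E[X] < ∞`, and
`α, β > 0` with `G_X(α, β) < ∞`,
`G_X(α, β) = ∑ₙ C(α, n) (-1)ⁿ (E[X])^(n+β) 𝒢ₑ(n+β)`, where
`𝒢ₑ(ν) = ∫_0^∞ ((1 - F x)/E[X])^ν dx` is the information generating function of the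
equilibrium density. -/
theorem stmt13 (μ : Measure ℝ) [IsProbabilityMeasure μ]
    (hnn : μ (Iio 0) = 0)
    (hint : Integrable id μ) (hm : 0 < ∫ x, x ∂μ)
    (hF : ∀ x : ℝ, 0 < x → 0 < cdfOf μ x)
    (α β : ℝ) (hα : 0 < α) (hβ : 0 < β) (hD : memD (cdfOf μ) α β) :
    cigf (cdfOf μ) α β =
      ∑' n : ℕ, genBinom α n * (-1) ^ n * (∫ x, x ∂μ) ^ ((n : ℝ) + β) *
        ∫ x in Ioi (0:ℝ), ((1 - cdfOf μ x) / ∫ y, y ∂μ) ^ ((n : ℝ) + β) :=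
  stmt13_general μ hnn hm hF α β hα hβ hD
end
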